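/- Let i ≥ 1 and j ≥ 0 be integers and let A be a symmetric n×n matrix with entries in {0,1} with i + j + 1 ≤ n and 2·min(i, j+1) ≤ n, with eigenvalues λ_1 ≥ ⋯ ≥ λ_n. Then λ_{i+1}(A) − λ_{n−j}(A) ≤ n/√(2·min(i, j+1)). -/

import Mathlib

/-!
Let `J` be the all-ones matrix and `𝟙` the all-ones vector. Since `A` is a `(0,1)`-matrix,
`B = 2A - J` has entries `±1`, so `‖B‖²_HS = n²`, and
`⟪x, Bx⟫ = 2⟪x, Ax⟫ - ⟪𝟙, x⟫²`. For every orthonormal family `v`, Cauchy–Schwarz and Bessel give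
`∑ ⟪v s, B v s⟫² ≤ ‖B‖²_HS`. Use the family made of `i` orthonormal vectors orthogonal to `𝟙` in
the span of the top `i + 1` eigenvectors, on which `⟪x, Bx⟫ ≥ 2λ_{i+1}`, and of the bottom
`j + 1` eigenvectors, on which `⟪x, Bx⟫ ≤ 2λ_{n-j}`. Each of the `i` top terms is at least
`4 max(λ_{i+1}, 0)²` and each of the `j + 1` bottom terms at least `4 min(λ_{n-j}, 0)²`, whence
`2 min(i, j+1) (λ_{i+1} - λ_{n-j})² ≤ n²`.
-/

open Finset Module Matrix
open scoped RealInnerProductSpace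

theorem exists_equiv_apply_eq_of_map_univ_val_eq {ι κ α : Type*} [Fintype ι] [Fintype κ]
    {f : ι → α} {g : κ → α} (h : univ.val.map f = univ.val.map g) :
    ∃ e : ι ≃ κ, ∀ x, g (e x) = f x := by
  classical
  have hfiber (c : α) : Fintype.card {x // f x = c} = Fintype.card {y // g y = c} := by
    simpa [Multiset.count_map, Fintype.card_subtype, card_def, filter_val, eq_comm] using
      congrArg (Multiset.count c) h
  exact ⟨Equiv.ofFiberEquiv fun c => Fintype.equivOfCardEq (hfiber c), Equiv.ofFiberEquiv_map _⟩

theorem min_card_mul_sq_sub_le {ι κ : Type*} [Fintype ι] [Fintype κ] {a b : ℝ}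
    (x : ι → ℝ) (y : κ → ℝ) (hba : b ≤ a) (hx : ∀ s, a ≤ x s) (hy : ∀ r, y r ≤ b) :
    ((min (Fintype.card ι) (Fintype.card κ) : ℕ) : ℝ) * (a - b) ^ 2 ≤
      2 * (∑ s, x s ^ 2 + ∑ r, y r ^ 2) := by
  set k : ℝ := ((min (Fintype.card ι) (Fintype.card κ) : ℕ) : ℝ)
  set p := max a 0 with hp_def
  set q := min b 0 with hq_def
  have hp : ∀ s, p ^ 2 ≤ x s ^ 2 := fun s => by
    rcases le_total 0 a with ha | ha
    · rw [hp_def, max_eq_left ha]; nlinarith [hx s]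
    · rw [hp_def, max_eq_right ha, sq, zero_mul]; positivity
  have hq : ∀ r, q ^ 2 ≤ y r ^ 2 := fun r => by
    rcases le_total b 0 with hb | hb
    · rw [hq_def, min_eq_left hb]; nlinarith [hy r]
    · rw [hq_def, min_eq_right hb, sq, zero_mul]; positivity
  have hxsum : k * p ^ 2 ≤ ∑ s, x s ^ 2 := by
    have := card_nsmul_le_sum univ (fun s => x s ^ 2) (p ^ 2) fun s _ => hp s
    rw [nsmul_eq_mul, card_univ] at this
    exact le_trans (mul_le_mul_of_nonneg_right (by simp [k]) (sq_nonneg p)) this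
  have hysum : k * q ^ 2 ≤ ∑ r, y r ^ 2 := by
    have := card_nsmul_le_sum univ (fun r => y r ^ 2) (q ^ 2) fun r _ => hq r
    rw [nsmul_eq_mul, card_univ] at this
    exact le_trans (mul_le_mul_of_nonneg_right (by simp [k]) (sq_nonneg q)) this
  have hab_pq : (a - b) ^ 2 ≤ 2 * (p ^ 2 + q ^ 2) := by
    have : a - b ≤ p - q := sub_le_sub (le_max_left a 0) (min_le_left b 0)
    nlinarith [sq_nonneg (p + q), le_max_right a 0, min_le_right b 0]
  have hk : 0 ≤ k := by positivity
  nlinarith [mul_le_mul_of_nonneg_left hab_pq hk]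

theorem le_div_sqrt_of_mul_sq_le_sq {c d N : ℝ} (hc : 0 < c) (hN : 0 ≤ N)
    (h : c * d ^ 2 ≤ N ^ 2) : d ≤ N / √c := by
  rw [le_div_iff₀ (Real.sqrt_pos.2 hc)]
  refine le_of_pow_le_pow_left₀ two_ne_zero hN ?_
  rw [mul_pow, Real.sq_sqrt hc.le]
  linarith

section InnerProductSpace

variable {E : Type*} [NormedAddCommGroup E] [InnerProductSpace ℝ E]

theorem Orthonormal.sum_elim {ι κ : Type*} {v : ι → E} {w : κ → E} (hv : Orthonormal ℝ v)
    (hw : Orthonormal ℝ w) (hvw : ∀ s r, ⟪v s, w r⟫ = 0) : Orthonormal ℝ (Sum.elim v w) := by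
  refine ⟨Sum.forall.2 ⟨hv.1, hw.1⟩, ?_⟩
  rintro (s | r) (s' | r') hne
  · exact hv.2 fun h => hne (congrArg Sum.inl h)
  · exact hvw s r'
  · simpa [real_inner_comm] using hvw s' r
  · exact hw.2 fun h => hne (congrArg Sum.inr h)

theorem LinearMap.IsSymmetric.sum_sq_inner_map_self_le {T : E →ₗ[ℝ] E} (hT : T.IsSymmetric)
    {ι κ : Type*} [Fintype ι] [Fintype κ] {v : ι → E} (hv : Orthonormal ℝ v)
    (f : OrthonormalBasis κ ℝ E) :
    ∑ s, ⟪v s, T (v s)⟫ ^ 2 ≤ ∑ t, ‖T (f t)‖ ^ 2 := by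
  calc ∑ s, ⟪v s, T (v s)⟫ ^ 2 ≤ ∑ s, ‖T (v s)‖ ^ 2 := sum_le_sum fun s _ => by
        simpa [hv.1 s, sq_abs] using
          pow_le_pow_left₀ (abs_nonneg _) (abs_real_inner_le_norm (v s) (T (v s))) 2
    _ = ∑ t, ∑ s, ‖⟪v s, T (f t)⟫‖ ^ 2 := by
        rw [sum_comm]
        refine sum_congr rfl fun s _ => ?_
        rw [← f.sum_sq_norm_inner_right]
        exact sum_congr rfl fun t _ => by rw [← hT, real_inner_comm]
    _ ≤ ∑ t, ‖T (f t)‖ ^ 2 := sum_le_sum fun t _ => hv.sum_inner_products_le _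

theorem LinearMap.IsSymmetric.mul_norm_sq_le_inner_map_self {T : E →ₗ[ℝ] E}
    (hT : T.IsSymmetric) {ι : Type*} [Fintype ι] (b : OrthonormalBasis ι ℝ E) {μ : ι → ℝ}
    (hb : ∀ t, T (b t) = μ t • b t) {a : ℝ} {x : E} (ha : ∀ t, ⟪b t, x⟫ ≠ 0 → a ≤ μ t) :
    a * ‖x‖ ^ 2 ≤ ⟪x, T x⟫ := by
  have hexpand : ⟪x, T x⟫ = ∑ t, μ t * ⟪b t, x⟫ ^ 2 := by
    rw [← b.sum_inner_mul_inner x (T x)]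
    refine sum_congr rfl fun t _ => ?_
    rw [← hT, hb, inner_smul_left, real_inner_comm]
    simp only [conj_trivial]
    ring
  rw [hexpand, ← b.sum_sq_norm_inner_right, mul_sum]
  refine sum_le_sum fun t _ => ?_
  by_cases h : ⟪b t, x⟫ = 0
  · simp [h]
  · rw [Real.norm_eq_abs, sq_abs]
    exact mul_le_mul_of_nonneg_right (ha t h) (sq_nonneg _)

theorem Submodule.exists_orthonormal_mem_orthogonal_singleton [FiniteDimensional ℝ E]
    (V : Submodule ℝ E) (e : E) {k : ℕ} (hk : k + 1 ≤ finrank ℝ V) :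
    ∃ w : Fin k → E, Orthonormal ℝ w ∧ ∀ s, w s ∈ V ∧ ⟪e, w s⟫ = 0 := by
  have hW : k ≤ finrank ℝ (V ⊓ (ℝ ∙ e)ᗮ :) := by
    have hsup := V.finrank_sup_add_finrank_inf_eq (ℝ ∙ e)ᗮ
    have hperp := (ℝ ∙ e).finrank_add_finrank_orthogonal
    have hline : finrank ℝ (ℝ ∙ e) ≤ 1 := by
      simpa using finrank_span_le_card ({e} : Set E)
    have := (V ⊔ (ℝ ∙ e)ᗮ).finrank_le
    omega
  set W := V ⊓ (ℝ ∙ e)ᗮ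
  let w : Fin k → E := fun s => (stdOrthonormalBasis ℝ W (Fin.castLE hW s) : E)
  refine ⟨w, ?_, fun s => ?_⟩
  · exact ((stdOrthonormalBasis ℝ W).orthonormal.comp _
      (Fin.castLE_injective hW)).comp_linearIsometry W.subtypeₗᵢ
  · obtain ⟨hV, he⟩ := Submodule.mem_inf.1 (stdOrthonormalBasis ℝ W (Fin.castLE hW s)).2
    exact ⟨hV, Submodule.mem_orthogonal_singleton_iff_inner_right.1 he⟩

theorem OrthonormalBasis.exists_orthonormal_inner_eq_zero [FiniteDimensional ℝ E] {n : ℕ}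
    (b : OrthonormalBasis (Fin n) ℝ E) (p : Fin n) (e : E) :
    ∃ w : Fin p → E, Orthonormal ℝ w ∧ (∀ s, ⟪e, w s⟫ = 0) ∧ ∀ s t, p < t → ⟪b t, w s⟫ = 0 := by
  set V := Submodule.span ℝ (Set.range fun t : Set.Iic p => b t)
  have hV : finrank ℝ V = p + 1 := by
    have hli : LinearIndependent ℝ fun t : Set.Iic p => b t :=
      b.orthonormal.linearIndependent.comp _ Subtype.val_injective
    rw [finrank_span_eq_card hli, Fintype.card_Iic, Fin.card_Iic]
  obtain ⟨w, hw, hwV⟩ := V.exists_orthonormal_mem_orthogonal_singleton e hV.ge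
  refine ⟨w, hw, fun s => (hwV s).2, fun s t hpt => ?_⟩
  have hVt : V ≤ (ℝ ∙ b t)ᗮ := Submodule.span_le.2 <| Set.range_subset_iff.2 fun r =>
    Submodule.mem_orthogonal_singleton_iff_inner_right.2 <|
      b.orthonormal.2 (hpt.trans_le' r.2).ne'
  exact Submodule.mem_orthogonal_singleton_iff_inner_right.1 (hVt (hwV s).1)

theorem spread_sq_le_sum_norm_sq [FiniteDimensional ℝ E] {T M : E →ₗ[ℝ] E}
    (hT : T.IsSymmetric) (hM : M.IsSymmetric) (e : E)
    (hMT : ∀ x, ⟪x, M x⟫ = 2 * ⟪x, T x⟫ - ⟪e, x⟫ ^ 2) {n : ℕ}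
    (b : OrthonormalBasis (Fin n) ℝ E) {μ : Fin n → ℝ} (hμ : Antitone μ)
    (hb : ∀ t, T (b t) = μ t • b t) {κ : Type*} [Fintype κ] (f : OrthonormalBasis κ ℝ E)
    {p q : Fin n} (hpq : p < q) :
    2 * ((min (p : ℕ) (n - q) : ℕ) : ℝ) * (μ p - μ q) ^ 2 ≤ ∑ t, ‖M (f t)‖ ^ 2 := by
  obtain ⟨w, hw, hwe, hwb⟩ := b.exists_orthonormal_inner_eq_zero p e
  let u : Set.Ici q → E := fun t => b t
  have hu : Orthonormal ℝ u := b.orthonormal.comp _ Subtype.val_injective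
  have hv := hw.sum_elim hu fun s r => by
    rw [real_inner_comm]
    exact hwb s r (hpq.trans_le r.2)
  have hHS := hM.sum_sq_inner_map_self_le hv f
  rw [Fintype.sum_sum_type] at hHS
  have htop (s : Fin p) : 2 * μ p ≤ ⟪w s, M (w s)⟫ := by
    have := hT.mul_norm_sq_le_inner_map_self b hb (x := w s) (a := μ p) fun t ht =>
      hμ (not_lt.1 fun hpt => ht (hwb s t hpt))
    rw [hw.1 s] at this
    rw [hMT, hwe s]
    linarith
  have hbot (r : Set.Ici q) : ⟪u r, M (u r)⟫ ≤ 2 * μ q := by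
    have hr : ⟪u r, T (u r)⟫ = μ r := by
      simp [u, hb, inner_smul_right, b.orthonormal.1]
    rw [hMT, hr]
    nlinarith [hμ r.2, sq_nonneg ⟪e, u r⟫]
  have key := min_card_mul_sq_sub_le _ _ (by linarith [hμ hpq.le]) htop hbot
  simp only [Fintype.card_fin, Fintype.card_Ici, Fin.card_Ici, Sum.elim_inl, Sum.elim_inr]
    at key hHS
  nlinarith

end InnerProductSpace

section EuclideanSpace

variable {m : Type*} [Fintype m] [DecidableEq m]

theorem Matrix.sum_norm_sq_toEuclideanLin_basisFun (M : Matrix m m ℝ) :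
    ∑ t, ‖toEuclideanLin M (EuclideanSpace.basisFun m ℝ t)‖ ^ 2 = ∑ t, ∑ x, M x t ^ 2 := by
  refine sum_congr rfl fun t _ => ?_
  rw [EuclideanSpace.norm_sq_eq]
  simp [toLpLin_apply]

theorem Matrix.inner_toEuclideanLin_two_smul_sub_ones (A : Matrix m m ℝ)
    (x : EuclideanSpace ℝ m) :
    ⟪x, toEuclideanLin ((2 : ℝ) • A - of fun _ _ => 1) x⟫ =
      2 * ⟪x, toEuclideanLin A x⟫ - ⟪WithLp.toLp 2 1, x⟫ ^ 2 := by
  have hJ : toEuclideanLin (of fun _ _ => 1 : Matrix m m ℝ) x =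
      ⟪WithLp.toLp 2 (1 : m → ℝ), x⟫ • WithLp.toLp 2 (1 : m → ℝ) := by
    ext y
    simp [toLpLin_apply, mulVec, dotProduct, PiLp.inner_apply]
  rw [map_sub, LinearMap.sub_apply, inner_sub_right, hJ, inner_smul_right, real_inner_comm x,
    map_smul, LinearMap.smul_apply, inner_smul_right]
  ring

end EuclideanSpace

/-- For integers `i ≥ 1`, `j ≥ 0` and a symmetric `n × n` `(0,1)`-matrix `A`
with `i + j + 1 ≤ n` and `2·min(i, j+1) ≤ n`, with eigenvalues `μ` in nonincreasing order,
`λ_{i+1}(A) - λ_{n-j}(A) ≤ n / √(2·min(i, j+1))`. -/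
theorem spread_ij_min_upper_bound (n i j : ℕ) (hi : 1 ≤ i) (hn : i + j + 1 ≤ n)
    (A : Matrix (Fin n) (Fin n) ℝ) (hA : A.IsHermitian)
    (hA01 : ∀ a b, A a b = 0 ∨ A a b = 1)
    (μ : Fin n → ℝ) (hmono : Antitone μ)
    (hperm : Finset.univ.val.map μ = Finset.univ.val.map hA.eigenvalues) :
    μ ⟨i, by omega⟩ - μ ⟨n - j - 1, by omega⟩ ≤
      (n : ℝ) / Real.sqrt (2 * (min i (j + 1) : ℕ)) := by
  set p : Fin n := ⟨i, by omega⟩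
  set q : Fin n := ⟨n - j - 1, by omega⟩
  rcases le_or_gt (μ p) (μ q) with hle | hlt
  · exact (sub_nonpos.2 hle).trans (by positivity)
  obtain ⟨σ, hσ⟩ := exists_equiv_apply_eq_of_map_univ_val_eq hperm
  set B : Matrix (Fin n) (Fin n) ℝ := (2 : ℝ) • A - of fun _ _ => 1
  have hB : B.IsHermitian := (hA.smul (by simp)).sub (by ext; simp)
  have hBsq (x y : Fin n) : B x y ^ 2 = 1 := by
    rcases hA01 x y with h | h <;> norm_num [B, h]
  have key := spread_sq_le_sum_norm_sq (isSymmetric_toEuclideanLin_iff.2 hA)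
    (isSymmetric_toEuclideanLin_iff.2 hB) _ (inner_toEuclideanLin_two_smul_sub_ones A)
    (hA.eigenvectorBasis.reindex σ.symm) hmono
    (fun t => by simp [toLpLin_apply, hA.mulVec_eigenvectorBasis, hσ])
    (EuclideanSpace.basisFun _ ℝ) (hmono.reflect_lt hlt)
  rw [sum_norm_sq_toEuclideanLin_basisFun] at key
  simp only [hBsq, sum_const, card_univ, Fintype.card_fin, nsmul_eq_mul, mul_one] at key
  have hq : n - (q : ℕ) = j + 1 := by simp only [q]; omega
  rw [hq] at key
  exact le_div_sqrt_of_mul_sq_le_sq (by positivity) (Nat.cast_nonneg n) (by nlinarith)
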